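/- arXiv:2012.09648 — 4 statements merged into one kernel-verified Lean document; each statement's English description precedes it below -/
import Mathlib

section
/- For a left-continuous distortion function g, the Wang premium principle π_g(X) = (1+θ)∫₀^∞ g(S_X(x)) dx is lower semicontinuous with respect to dominated almost-sure convergence: if X_n ≥ 0, X_n ≤ Y a.s. with Y ∈ L^p, and X_n → X a.s., then liminf_n π_g(X_n) ≥ π_g(X). -/
/-!
Almost sure convergence gives `S_X(x) ≤ liminf S_{Xₙ}(x)` for every `x`, by Fatou's lemma for
the events `{x < Xₙ}`. Since `g` is increasing and left-continuous, this upgrades to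
`g(S_X(x)) ≤ liminf g(S_{Xₙ}(x))`, and Fatou's lemma for the outer integral (whose integrands are
antitone in `x`, hence measurable) concludes.
-/

open MeasureTheory Filter Set Topology

namespace MeasureTheory

variable {α : Type*} [MeasurableSpace α] {μ : Measure α}

/-- No measurability is needed: continuity from below holds for arbitrary monotone families of
sets. -/
theorem measure_le_liminf_measure_of_ae_eventually_mem {ι : Type*} [Preorder ι] [IsDirectedOrder ι]
    [Nonempty ι] [(atTop : Filter ι).IsCountablyGenerated] {s : ι → Set α} {t : Set α}
    (h : ∀ᵐ x ∂μ, x ∈ t → ∀ᶠ i in atTop, x ∈ s i) :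
    μ t ≤ liminf (fun i => μ (s i)) atTop := by
  have htail : Monotone fun i => ⋂ j ≥ i, s j := fun i i' hii' =>
    biInter_mono (fun _ hj => hii'.trans hj) fun _ _ => subset_rfl
  have ht : t ≤ᵐ[μ] ⋃ i, ⋂ j ≥ i, s j := by
    filter_upwards [h] with x hx hxt
    obtain ⟨i, hi⟩ := (hx hxt).exists_forall_of_atTop
    exact mem_iUnion.2 ⟨i, mem_iInter₂.2 hi⟩
  calc μ t ≤ μ (⋃ i, ⋂ j ≥ i, s j) := measure_mono_ae ht
    _ = ⨆ i, μ (⋂ j ≥ i, s j) := htail.measure_iUnion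
    _ ≤ liminf (fun i => μ (s i)) atTop := iSup_le fun i =>
      le_liminf_of_le (by isBoundedDefault) <|
        (eventually_ge_atTop i).mono fun j hj => measure_mono (biInter_subset_of_mem hj)

theorem measure_preimage_le_liminf_of_ae_tendsto {ι β : Type*} [Preorder ι] [IsDirectedOrder ι]
    [Nonempty ι] [(atTop : Filter ι).IsCountablyGenerated] [TopologicalSpace β]
    {f : ι → α → β} {F : α → β}
    (hf : ∀ᵐ x ∂μ, Tendsto (fun i => f i x) atTop (𝓝 (F x))) {U : Set β} (hU : IsOpen U) :
    μ (F ⁻¹' U) ≤ liminf (fun i => μ (f i ⁻¹' U)) atTop :=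
  measure_le_liminf_measure_of_ae_eventually_mem <|
    hf.mono fun _ hx hxU => hx (hU.mem_nhds hxU)

theorem antitone_toReal_measure_lt [IsFiniteMeasure μ] (F : α → ℝ) :
    Antitone fun x : ℝ => (μ {a | x < F a}).toReal := fun _ _ hxy =>
  ENNReal.toReal_mono (measure_ne_top μ _) (measure_mono fun _ ha => hxy.trans_lt ha)

end MeasureTheory

theorem ENNReal.eventually_lt_toReal_of_le_liminf {ι : Type*} {l : Filter ι} {u : ι → ENNReal}
    {m : ENNReal} (hu : ∀ i, u i ≠ ⊤) (hm : m ≤ liminf u l) {t : ℝ} (ht : t < m.toReal) :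
    ∀ᶠ i in l, t < (u i).toReal := by
  rcases lt_or_ge t 0 with ht0 | ht0
  · exact Eventually.of_forall fun i => ht0.trans_le ENNReal.toReal_nonneg
  have hm' : ENNReal.ofReal t < liminf u l :=
    ((ENNReal.ofReal_lt_ofReal_iff_of_nonneg ht0).2 ht).trans_le
      (ENNReal.ofReal_toReal_le.trans hm)
  exact (eventually_lt_of_lt_liminf hm').mono fun i hi =>
    (ENNReal.ofReal_lt_iff_lt_toReal ht0 (hu i)).1 hi

theorem Monotone.le_liminf_comp_of_continuousWithinAt_Iio {α β ι : Type*} [LinearOrder α]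
    [TopologicalSpace α] [OrderTopology α] [DenselyOrdered α] [NoMinOrder α]
    [CompleteLinearOrder β] [TopologicalSpace β] [OrderTopology β]
    {G : α → β} (hG : Monotone G) {s : α} (hGs : ContinuousWithinAt G (Iio s) s)
    {l : Filter ι} {u : ι → α} (hu : ∀ t < s, ∀ᶠ i in l, t < u i) :
    G s ≤ liminf (fun i => G (u i)) l := by
  refine (le_liminf_iff).2 fun c hc => ?_
  obtain ⟨t, hct, hts⟩ := ((hGs.eventually (lt_mem_nhds hc)).and self_mem_nhdsWithin).exists
  exact (hu t hts).mono fun i hi => hct.trans_le (hG hi.le)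

theorem wang_premium_fatou_general {Ω : Type*} [MeasurableSpace Ω]
    (μ : Measure Ω) [IsProbabilityMeasure μ]
    (g : ℝ → ℝ) (hgmono : Monotone g)
    (hglc : ∀ x, ContinuousWithinAt g (Set.Iio x) x)
    (θ : ℝ)
    (X : ℕ → Ω → ℝ) (Xlim : Ω → ℝ)
    (hconv : ∀ᵐ ω ∂μ, Tendsto (fun n => X n ω) atTop (nhds (Xlim ω))) :
    ENNReal.ofReal (1 + θ) *
        ∫⁻ x in Set.Ioi (0 : ℝ), ENNReal.ofReal (g ((μ {ω | x < Xlim ω}).toReal)) ≤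
      liminf (fun n => ENNReal.ofReal (1 + θ) *
        ∫⁻ x in Set.Ioi (0 : ℝ), ENNReal.ofReal (g ((μ {ω | x < X n ω}).toReal))) atTop := by
  have hG : Monotone (ENNReal.ofReal ∘ g) := ENNReal.ofReal_mono.comp hgmono
  have hsurvival (x : ℝ) : ENNReal.ofReal (g ((μ {ω | x < Xlim ω}).toReal)) ≤
      liminf (fun n => ENNReal.ofReal (g ((μ {ω | x < X n ω}).toReal))) atTop :=
    hG.le_liminf_comp_of_continuousWithinAt_Iio
      (ENNReal.continuous_ofReal.continuousAt.comp_continuousWithinAt (hglc _)) fun _ ht =>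
        ENNReal.eventually_lt_toReal_of_le_liminf (fun _ => measure_ne_top μ _)
          (measure_preimage_le_liminf_of_ae_tendsto hconv isOpen_Ioi) ht
  rw [ENNReal.liminf_const_mul_of_ne_top ENNReal.ofReal_ne_top]
  gcongr
  calc ∫⁻ x in Ioi 0, ENNReal.ofReal (g ((μ {ω | x < Xlim ω}).toReal))
      ≤ ∫⁻ x in Ioi 0, liminf (fun n => ENNReal.ofReal (g ((μ {ω | x < X n ω}).toReal))) atTop :=
        lintegral_mono hsurvival
    _ ≤ _ := lintegral_liminf_le fun n =>
        (hG.comp_antitone (antitone_toReal_measure_lt (X n))).measurable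

/-- Fatou property of the Wang premium principle: for a left-continuous distortion
function `g`, if `0 ≤ Xₙ ≤ Y` a.s. with `Y ∈ L^p` and `Xₙ → X` a.s., then
`liminf_n π_g(Xₙ) ≥ π_g(X)`, where `π_g(X) = (1+θ)∫₀^∞ g(S_X(x)) dx`. -/
theorem wang_premium_fatou {Ω : Type*} [MeasurableSpace Ω]
    (μ : Measure Ω) [IsProbabilityMeasure μ]
    (g : ℝ → ℝ) (hgmono : Monotone g) (hg0 : g 0 = 0) (hg1 : g 1 = 1)
    (hglc : ∀ x, ContinuousWithinAt g (Set.Iio x) x)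
    (θ : ℝ) (hθ : 0 ≤ θ) (p : ENNReal) (hp : 1 ≤ p)
    (X : ℕ → Ω → ℝ) (Xlim : Ω → ℝ) (Y : Ω → ℝ)
    (hmeas : ∀ n, Measurable (X n)) (hmeaslim : Measurable Xlim)
    (hpos : ∀ n ω, 0 ≤ X n ω) (hposlim : ∀ ω, 0 ≤ Xlim ω)
    (hY : MemLp Y p μ)
    (hdom : ∀ n, ∀ᵐ ω ∂μ, X n ω ≤ Y ω)
    (hconv : ∀ᵐ ω ∂μ, Tendsto (fun n => X n ω) atTop (nhds (Xlim ω))) :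
    ENNReal.ofReal (1 + θ) *
        ∫⁻ x in Set.Ioi (0 : ℝ), ENNReal.ofReal (g ((μ {ω | x < Xlim ω}).toReal)) ≤
      liminf (fun n => ENNReal.ofReal (1 + θ) *
        ∫⁻ x in Set.Ioi (0 : ℝ), ENNReal.ofReal (g ((μ {ω | x < X n ω}).toReal))) atTop :=
  wang_premium_fatou_general μ g hgmono hglc θ X Xlim hconv
end

section
/- Expected Shortfall ES_α(X) = (1/(1−α)) ∫_α^1 F_X^{-1}(u) du, α ∈ [0,1), is subadditive on L^1: ES_α(X + Y) ≤ ES_α(X) + ES_α(Y) for all integrable X, Y. -/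
/-!
For `0 < α` the tail integral `∫_α^1 F_X⁻¹` is the value at `r = F_X⁻¹(α)` of
`r ↦ (1 - α) r + 𝔼 (X - r)⁺`, and it is at most the value at any other `r` (Rockafellar–Uryasev).
Since `(a + b - (r + s))⁺ ≤ (a - r)⁺ + (b - s)⁺`, evaluating the bound for `X + Y` at
`r = F_X⁻¹(α) + F_Y⁻¹(α)` gives subadditivity; for `α = 0` the tail integral is `𝔼 X`, which is
additive. Both facts come from the quantile transform: the quantile function of `X` pushes Lebesgue
measure on `(0, 1)` forward to the law of `X`.
-/

open MeasureTheory

/-- The (generalized inverse) quantile function of `X` under `μ`. -/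
noncomputable def quantileFn {Ω : Type*} [MeasurableSpace Ω]
    (μ : Measure Ω) (X : Ω → ℝ) (u : ℝ) : ℝ :=
  sInf {x : ℝ | u ≤ (μ {ω | X ω ≤ x}).toReal}

/-- Expected Shortfall `ES_α(X) = (1/(1−α)) ∫_α^1 F_X^{-1}(u) du`. -/
noncomputable def expShortfall {Ω : Type*} [MeasurableSpace Ω]
    (μ : Measure Ω) (α : ℝ) (X : Ω → ℝ) : ℝ :=
  (1 - α)⁻¹ * ∫ u in Set.Ioo α 1, quantileFn μ X u

open ProbabilityTheory Set Filter Topology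

noncomputable def quantile (ν : Measure ℝ) (u : ℝ) : ℝ := sInf {x | u ≤ cdf ν x}

section Quantile

variable {ν : Measure ℝ} {u x α : ℝ}

lemma setOf_le_cdf_nonempty (hu : u < 1) : {x | u ≤ cdf ν x}.Nonempty :=
  let ⟨x, hx⟩ := ((tendsto_cdf_atTop ν).eventually (eventually_gt_nhds hu)).exists
  ⟨x, hx.le⟩

lemma bddBelow_setOf_le_cdf (hu : 0 < u) : BddBelow {x | u ≤ cdf ν x} := by
  obtain ⟨x₀, hx₀⟩ :=
    eventually_atBot.mp ((tendsto_cdf_atBot ν).eventually (eventually_lt_nhds hu))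
  exact ⟨x₀, fun x hx => le_of_not_ge fun hxx₀ => (hx₀ x hxx₀).not_ge hx⟩

lemma le_cdf_quantile (hu : u ∈ Ioo 0 1) : u ≤ cdf ν (quantile ν u) := by
  refine ge_of_tendsto
    (((cdf ν).right_continuous _).mono_left (nhdsWithin_mono _ Ioi_subset_Ici_self)) ?_
  filter_upwards [self_mem_nhdsWithin] with y hy
  obtain ⟨z, hz, hzy⟩ :=
    (csInf_lt_iff (bddBelow_setOf_le_cdf hu.1) (setOf_le_cdf_nonempty hu.2)).mp hy
  exact hz.trans (monotone_cdf ν hzy.le)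

lemma quantile_le_iff (hu : u ∈ Ioo 0 1) : quantile ν u ≤ x ↔ u ≤ cdf ν x :=
  ⟨fun h => (le_cdf_quantile hu).trans (monotone_cdf ν h),
    fun h => csInf_le (bddBelow_setOf_le_cdf hu.1) h⟩

lemma monotoneOn_quantile : MonotoneOn (quantile ν) (Ioo 0 1) := fun _ hu _ hv huv =>
  csInf_le_csInf (bddBelow_setOf_le_cdf hu.1) (setOf_le_cdf_nonempty hv.2) fun _ hx => huv.trans hx

lemma aemeasurable_quantile : AEMeasurable (quantile ν) (volume.restrict (Ioo 0 1)) :=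
  aemeasurable_restrict_of_monotoneOn measurableSet_Ioo monotoneOn_quantile

variable [IsProbabilityMeasure ν]

lemma map_quantile : (volume.restrict (Ioo 0 1)).map (quantile ν) = ν := by
  refine Measure.ext_of_Iic _ ν fun x => ?_
  have hpreimage : quantile ν ⁻¹' Iic x ∩ Ioo 0 1 = Iic (cdf ν x) ∩ Ioo 0 1 := by
    ext u
    simp only [mem_inter_iff, mem_preimage, mem_Iic, and_congr_left_iff]
    exact fun hu => quantile_le_iff hu
  rw [Measure.map_apply_of_aemeasurable aemeasurable_quantile measurableSet_Iic,
    Measure.restrict_apply' measurableSet_Ioo, hpreimage,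
    measure_congr ((ae_eq_refl _).inter Ioo_ae_eq_Ioc), inter_comm, Ioc_inter_Iic,
    min_eq_right (cdf_le_one ν x), Real.volume_Ioc, sub_zero, ofReal_cdf]

variable {E : Type*} [NormedAddCommGroup E] {f : ℝ → E}

lemma integral_comp_quantile [NormedSpace ℝ E] (hf : AEStronglyMeasurable f ν) :
    ∫ u in Ioo 0 1, f (quantile ν u) = ∫ x, f x ∂ν := by
  have h := integral_map (f := f) aemeasurable_quantile (by rwa [map_quantile (ν := ν)])
  rw [map_quantile] at h
  exact h.symm

lemma integrable_comp_quantile (hf : Integrable f ν) :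
    IntegrableOn (fun u => f (quantile ν u)) (Ioo 0 1) := by
  rw [← map_quantile (ν := ν)] at hf
  exact hf.comp_aemeasurable aemeasurable_quantile

lemma integrableOn_quantile (hν : Integrable id ν) : IntegrableOn (quantile ν) (Ioo 0 1) :=
  integrable_comp_quantile hν

lemma setIntegral_quantile_le (hν : Integrable id ν) (hα0 : 0 ≤ α) (hα1 : α ≤ 1) (r : ℝ) :
    ∫ u in Ioo α 1, quantile ν u ≤ (1 - α) * r + ∫ x, max (x - r) 0 ∂ν := by
  have hsub : Ioo α 1 ⊆ Ioo 0 1 := Ioo_subset_Ioo_left hα0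
  have hexcess : IntegrableOn (fun u => max (quantile ν u - r) 0) (Ioo 0 1) :=
    integrable_comp_quantile (f := fun x => max (x - r) 0) (hν.sub (integrable_const r)).pos_part
  calc ∫ u in Ioo α 1, quantile ν u
      ≤ ∫ u in Ioo α 1, (r + max (quantile ν u - r) 0) :=
        integral_mono ((integrableOn_quantile hν).mono_set hsub)
          ((integrable_const r).add (hexcess.mono_set hsub))
          fun u => by linarith [le_max_left (quantile ν u - r) 0]
    _ = (1 - α) * r + ∫ u in Ioo α 1, max (quantile ν u - r) 0 := by
        rw [integral_add (integrable_const r) (hexcess.mono_set hsub), setIntegral_const,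
          Real.volume_real_Ioo_of_le hα1, smul_eq_mul]
    _ ≤ (1 - α) * r + ∫ u in Ioo 0 1, max (quantile ν u - r) 0 :=
        add_le_add_right (setIntegral_mono_set hexcess
          (.of_forall fun u => le_max_right _ _) hsub.eventuallyLE) _
    _ = (1 - α) * r + ∫ x, max (x - r) 0 ∂ν := by
        rw [integral_comp_quantile (f := fun x => max (x - r) 0) (by fun_prop)]

lemma setIntegral_quantile_eq (hν : Integrable id ν) (hα : α ∈ Ioo 0 1) :
    ∫ u in Ioo α 1, quantile ν u =
      (1 - α) * quantile ν α + ∫ x, max (x - quantile ν α) 0 ∂ν := by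
  set r := quantile ν α
  have hsub : Ioo α 1 ⊆ Ioo 0 1 := Ioo_subset_Ioo_left hα.1.le
  have hexcess : EqOn (fun u => max (quantile ν u - r) 0)
      ((Ioo α 1).indicator fun u => quantile ν u - r) (Ioo 0 1) := by
    intro u hu
    dsimp only
    by_cases huα : α < u
    · rw [indicator_of_mem (show u ∈ Ioo α 1 from ⟨huα, hu.2⟩),
        max_eq_left (sub_nonneg.2 (monotoneOn_quantile hα hu huα.le))]
    · rw [indicator_of_notMem fun h => huα h.1,
        max_eq_right (sub_nonpos.2 (monotoneOn_quantile hu hα (not_lt.1 huα)))]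
  rw [← integral_comp_quantile (f := fun x => max (x - r) 0) (by fun_prop),
    setIntegral_congr_fun measurableSet_Ioo hexcess, setIntegral_indicator measurableSet_Ioo,
    inter_eq_right.2 hsub, integral_sub ((integrableOn_quantile hν).mono_set hsub)
    (integrable_const r), setIntegral_const, Real.volume_real_Ioo_of_le hα.2.le, smul_eq_mul]
  ring

end Quantile

section RandomVariable

variable {Ω : Type*} [MeasurableSpace Ω] {μ : Measure Ω} {X Y : Ω → ℝ} {α : ℝ}

lemma integrable_id_map (hX : Integrable X μ) : Integrable id (μ.map X) :=
  (integrable_map_measure aestronglyMeasurable_id hX.aemeasurable).2 hX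

variable [IsProbabilityMeasure μ]

lemma quantileFn_eq_quantile_map (hX : AEMeasurable X μ) :
    quantileFn μ X = quantile (μ.map X) := by
  have := Measure.isProbabilityMeasure_map hX
  ext u
  simp only [quantileFn, quantile, cdf_eq_real, measureReal_def,
    Measure.map_apply_of_aemeasurable hX measurableSet_Iic]
  rfl

lemma setIntegral_quantileFn_le (hX : Integrable X μ) (hα0 : 0 ≤ α) (hα1 : α ≤ 1) (r : ℝ) :
    ∫ u in Ioo α 1, quantileFn μ X u ≤ (1 - α) * r + ∫ ω, max (X ω - r) 0 ∂μ := by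
  have := Measure.isProbabilityMeasure_map hX.aemeasurable
  have h := setIntegral_quantile_le (integrable_id_map hX) hα0 hα1 r
  rwa [integral_map hX.aemeasurable (by fun_prop),
    ← quantileFn_eq_quantile_map hX.aemeasurable] at h

lemma setIntegral_quantileFn_eq (hX : Integrable X μ) (hα : α ∈ Ioo 0 1) :
    ∫ u in Ioo α 1, quantileFn μ X u =
      (1 - α) * quantileFn μ X α + ∫ ω, max (X ω - quantileFn μ X α) 0 ∂μ := by
  have := Measure.isProbabilityMeasure_map hX.aemeasurable
  have h := setIntegral_quantile_eq (integrable_id_map hX) hα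
  rwa [integral_map hX.aemeasurable (by fun_prop),
    ← quantileFn_eq_quantile_map hX.aemeasurable] at h

lemma setIntegral_Ioo_zero_one_quantileFn (hX : AEMeasurable X μ) :
    ∫ u in Ioo 0 1, quantileFn μ X u = ∫ ω, X ω ∂μ := by
  have := Measure.isProbabilityMeasure_map hX
  rw [quantileFn_eq_quantile_map hX,
    integral_comp_quantile (f := fun x => x) aestronglyMeasurable_id]
  exact integral_map hX aestronglyMeasurable_id

lemma setIntegral_quantileFn_add_le (hX : Integrable X μ) (hY : Integrable Y μ) (hα0 : 0 ≤ α)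
    (hα1 : α < 1) :
    ∫ u in Ioo α 1, quantileFn μ (X + Y) u ≤
      (∫ u in Ioo α 1, quantileFn μ X u) + ∫ u in Ioo α 1, quantileFn μ Y u := by
  rcases hα0.eq_or_lt with rfl | hα_pos
  · rw [setIntegral_Ioo_zero_one_quantileFn (hX.add hY).aemeasurable,
      setIntegral_Ioo_zero_one_quantileFn hX.aemeasurable,
      setIntegral_Ioo_zero_one_quantileFn hY.aemeasurable]
    exact (integral_add hX hY).le
  set r := quantileFn μ X α
  set s := quantileFn μ Y α
  have hexcess : ∫ ω, max ((X + Y) ω - (r + s)) 0 ∂μ ≤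
      ∫ ω, max (X ω - r) 0 ∂μ + ∫ ω, max (Y ω - s) 0 ∂μ := by
    have hXr : Integrable (fun ω => max (X ω - r) 0) μ := (hX.sub (integrable_const r)).pos_part
    have hYs : Integrable (fun ω => max (Y ω - s) 0) μ := (hY.sub (integrable_const s)).pos_part
    rw [← integral_add hXr hYs]
    refine integral_mono ((hX.add hY).sub (integrable_const (r + s))).pos_part (hXr.add hYs)
      fun ω => ?_
    rw [Pi.add_apply]
    exact max_le (by linarith [le_max_left (X ω - r) 0, le_max_left (Y ω - s) 0])
      (by positivity)
  linarith [setIntegral_quantileFn_le (hX.add hY) hα_pos.le hα1.le (r + s),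
    setIntegral_quantileFn_eq hX ⟨hα_pos, hα1⟩, setIntegral_quantileFn_eq hY ⟨hα_pos, hα1⟩]

end RandomVariable

theorem expShortfall_subadditive_general {Ω : Type*} [MeasurableSpace Ω]
    (μ : Measure Ω) [IsProbabilityMeasure μ]
    (α : ℝ) (hα0 : 0 ≤ α) (hα1 : α < 1)
    (X Y : Ω → ℝ)
    (hX : Integrable X μ) (hY : Integrable Y μ) :
    expShortfall μ α (fun ω => X ω + Y ω) ≤ expShortfall μ α X + expShortfall μ α Y := by
  rw [expShortfall, expShortfall, expShortfall, ← mul_add]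
  exact mul_le_mul_of_nonneg_left (setIntegral_quantileFn_add_le hX hY hα0 hα1)
    (inv_nonneg.2 (sub_nonneg.2 hα1.le))

/-- Expected Shortfall is subadditive on `L¹`. -/
theorem expShortfall_subadditive {Ω : Type*} [MeasurableSpace Ω]
    (μ : Measure Ω) [IsProbabilityMeasure μ]
    (α : ℝ) (hα0 : 0 ≤ α) (hα1 : α < 1)
    (X Y : Ω → ℝ) (hXm : Measurable X) (hYm : Measurable Y)
    (hX : Integrable X μ) (hY : Integrable Y μ) :
    expShortfall μ α (fun ω => X ω + Y ω) ≤ expShortfall μ α X + expShortfall μ α Y :=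
  expShortfall_subadditive_general μ α hα0 hα1 X Y hX hY
end

section
/- Let Y be a nonnegative random variable, α ∈ (0,1), and set v = VaR_α(Y). For any f ∈ 𝓕, define a = f(v) and the layer function h_a(x) = max{min{a, x}, x − v + a}. Then h_a ∈ 𝓕, h_a(v) = f(v), and h_a(x) ≥ f(x) for all x ≥ 0 (hence Y − h_a(Y) ≤ Y − f(Y) pointwise). -/
/-!
The layer function `h_a` is the largest member of `𝓕` through the point `(v, f v)`: below `v`,
`f` is capped both by `f v` (monotonicity) and by the identity; above `v`, `f` can grow at most
with slope one from `f v` (monotonicity of `id - f`). Since `Y ≥ 0`, also `v ≥ 0`, so `v` lies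
in the domain `ℝ≥0` of `f`.
-/

open MeasureTheory

/-- The paper's `h_a`: the insurer retains the loss up to `a` and beyond `v`, the reinsurer
pays the layer `[a, v]`. -/
def layer (a v x : ℝ) : ℝ :=
  max (min a x) (x - v + a)

section Layer

variable {a v x : ℝ}

theorem layer_nonneg (ha : 0 ≤ a) (hx : 0 ≤ x) : 0 ≤ layer a v x :=
  (le_min ha hx).trans (le_max_left _ _)

theorem layer_le_self (hav : a ≤ v) (x : ℝ) : layer a v x ≤ x :=
  max_le (min_le_right _ _) (by linarith)

theorem layer_self (hav : a ≤ v) : layer a v v = a := by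
  simp [layer, min_eq_left hav]

theorem monotone_layer (a v : ℝ) : Monotone (layer a v) := fun _ _ hxy =>
  max_le_max (min_le_min_left a hxy) (by simpa using hxy)

theorem sub_layer_eq (a v x : ℝ) : x - layer a v x = min (max (x - a) 0) (v - a) := by
  rw [layer, ← min_sub_sub_left, ← max_sub_sub_left, sub_self]
  congr 1
  abel

theorem monotone_sub_layer (a v : ℝ) : Monotone fun x => x - layer a v x := by
  have h_sub : Monotone fun x : ℝ => x - a := fun _ _ h => sub_le_sub_right h a
  simp only [sub_layer_eq]
  exact (h_sub.max monotone_const).min monotone_const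

theorem le_layer_of_monotoneOn {s : Set ℝ} {f : ℝ → ℝ} (hf : ∀ t ∈ s, f t ≤ t)
    (hf_mono : MonotoneOn f s) (hf_sub_mono : MonotoneOn (fun t => t - f t) s)
    (hv : v ∈ s) (hx : x ∈ s) : f x ≤ layer (f v) v x := by
  rcases le_total x v with hxv | hvx
  · exact (le_min (hf_mono hx hv hxv) (hf x hx)).trans (le_max_left _ _)
  · have h_slope := hf_sub_mono hv hx hvx
    exact le_max_of_le_right (by simp only at h_slope; linarith)

end Layer

theorem quantileFn_nonneg {Ω : Type*} [MeasurableSpace Ω] (μ : Measure Ω) {X : Ω → ℝ}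
    (hX : ∀ ω, 0 ≤ X ω) {u : ℝ} (hu : 0 < u) : 0 ≤ quantileFn μ X u := by
  refine Real.sInf_nonneg fun x hx => ?_
  by_contra! hx_neg
  have hempty : {ω | X ω ≤ x} = ∅ :=
    Set.eq_empty_of_forall_notMem fun ω hω => (hX ω).not_gt (lt_of_le_of_lt hω hx_neg)
  have hu_le : u ≤ (μ {ω | X ω ≤ x}).toReal := hx
  simp only [hempty, measure_empty, ENNReal.toReal_zero] at hu_le
  linarith

theorem layer_dominates_general {Ω : Type*} [MeasurableSpace Ω]
    (μ : Measure Ω)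
    (Y : Ω → ℝ) (hYpos : ∀ ω, 0 ≤ Y ω)
    (α : ℝ) (hα : α ∈ Set.Ioo (0 : ℝ) 1)
    (f : ℝ → ℝ) (hf1 : ∀ t, 0 ≤ t → 0 ≤ f t ∧ f t ≤ t)
    (hf2 : MonotoneOn f (Set.Ici 0))
    (hf3 : MonotoneOn (fun t => t - f t) (Set.Ici 0))
    (v : ℝ) (hv : v = quantileFn μ Y α) (a : ℝ) (ha : a = f v) :
    (∀ x, 0 ≤ x → 0 ≤ max (min a x) (x - v + a) ∧ max (min a x) (x - v + a) ≤ x) ∧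
    MonotoneOn (fun x => max (min a x) (x - v + a)) (Set.Ici 0) ∧
    MonotoneOn (fun x => x - max (min a x) (x - v + a)) (Set.Ici 0) ∧
    max (min a v) (v - v + a) = f v ∧
    (∀ x, 0 ≤ x → f x ≤ max (min a x) (x - v + a)) := by
  have hv0 : 0 ≤ v := hv ▸ quantileFn_nonneg μ hYpos hα.1
  obtain ⟨ha0, hav⟩ : 0 ≤ a ∧ a ≤ v := ha ▸ hf1 v hv0
  subst ha
  exact ⟨fun x hx => ⟨layer_nonneg ha0 hx, layer_le_self hav x⟩,
    (monotone_layer _ v).monotoneOn _, (monotone_sub_layer _ v).monotoneOn _, layer_self hav,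
    fun x hx => le_layer_of_monotoneOn (fun t ht => (hf1 t ht).2) hf2 hf3 hv0 hx⟩

/-- Layer reinsurance dominates: with `v = VaR_α(Y)`, `a = f(v)` and
`h_a(x) = max{min{a,x}, x − v + a}`, the layer function `h_a` belongs to `𝓕`,
agrees with `f` at `v`, and dominates `f` pointwise on `ℝ₊`. -/
theorem layer_dominates {Ω : Type*} [MeasurableSpace Ω]
    (μ : Measure Ω) [IsProbabilityMeasure μ]
    (Y : Ω → ℝ) (hYpos : ∀ ω, 0 ≤ Y ω) (hYm : Measurable Y)
    (α : ℝ) (hα : α ∈ Set.Ioo (0 : ℝ) 1)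
    (f : ℝ → ℝ) (hf1 : ∀ t, 0 ≤ t → 0 ≤ f t ∧ f t ≤ t)
    (hf2 : MonotoneOn f (Set.Ici 0))
    (hf3 : MonotoneOn (fun t => t - f t) (Set.Ici 0))
    (v : ℝ) (hv : v = quantileFn μ Y α) (a : ℝ) (ha : a = f v) :
    (∀ x, 0 ≤ x → 0 ≤ max (min a x) (x - v + a) ∧ max (min a x) (x - v + a) ≤ x) ∧
    MonotoneOn (fun x => max (min a x) (x - v + a)) (Set.Ici 0) ∧
    MonotoneOn (fun x => x - max (min a x) (x - v + a)) (Set.Ici 0) ∧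
    max (min a v) (v - v + a) = f v ∧
    (∀ x, 0 ≤ x → f x ≤ max (min a x) (x - v + a)) :=
  layer_dominates_general μ Y hYpos α hα f hf1 hf2 hf3 v hv a ha
end

section
/- Let Y ~ Uniform(0,1) and f ∈ 𝓕. Then there exists a ∈ [0,1] such that E[min{Y, a}] = E[f(Y)], and for this a, min{Y, a} precedes f(Y) in the convex order: E[φ(min{Y, a})] ≤ E[φ(f(Y))] for every convex function φ. -/
/-!
With `m` the right derivative of `φ` at `a`, the function `ψ x = φ x - m x` is antitone on
`(-∞, a]` and minimal at `a`. Hence `ψ (min y a) ≤ ψ (f y)` pointwise: for `y ≥ a` because `a`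
minimizes `ψ`, and for `y < a` because `f y ≤ y < a`. Integrating, the linear parts cancel since
the means agree. The level `a` exists by the intermediate value theorem, as
`E[min Y a] = a - a ^ 2 / 2` runs over `[0, 1/2] ∋ E[f Y]`.
-/

open MeasureTheory Set

namespace ConvexOn

variable {φ : ℝ → ℝ} (hφ : ConvexOn ℝ univ φ)
include hφ

lemma slope_le_rightDeriv_of_le {z x a : ℝ} (hzx : z < x) (hxa : x ≤ a) :
    slope φ z x ≤ derivWithin φ (Ioi a) a := by
  calc slope φ z x ≤ slope φ z a :=
        hφ.slope_mono (mem_univ z) ⟨mem_univ x, hzx.ne'⟩ ⟨mem_univ a, (hzx.trans_le hxa).ne'⟩ hxa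
    _ ≤ derivWithin φ (Iio a) a :=
        hφ.slope_le_leftDeriv_of_mem_interior (mem_univ z) (by simp) (hzx.trans_le hxa)
    _ ≤ derivWithin φ (Ioi a) a := hφ.leftDeriv_le_rightDeriv_of_mem_interior (by simp)

lemma antitoneOn_sub_rightDeriv_mul (a : ℝ) :
    AntitoneOn (fun x ↦ φ x - derivWithin φ (Ioi a) a * x) (Iic a) := by
  intro z _ x hxa hzx
  rcases hzx.eq_or_lt with rfl | hzx
  · rfl
  have h := hφ.slope_le_rightDeriv_of_le hzx hxa
  rw [slope_def_field, div_le_iff₀ (sub_pos.2 hzx)] at h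
  dsimp only
  linarith

lemma isMinOn_sub_rightDeriv_mul (a : ℝ) :
    IsMinOn (fun x ↦ φ x - derivWithin φ (Ioi a) a * x) univ a := by
  refine isMinOn_iff.2 fun w _ ↦ ?_
  rcases le_or_gt w a with hwa | haw
  · exact hφ.antitoneOn_sub_rightDeriv_mul a hwa (mem_Iic.2 le_rfl) hwa
  · have h := hφ.rightDeriv_le_slope_of_mem_interior (by simp) (mem_univ w) haw
    rw [slope_def_field, le_div_iff₀ (sub_pos.2 haw)] at h
    linarith

theorem integral_comp_le_of_truncation {Ω : Type*} [MeasurableSpace Ω] {μ : Measure Ω}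
    {X Z : Ω → ℝ} {a : ℝ} (hX : Integrable X μ) (hZ : Integrable Z μ)
    (hmean : ∫ ω, X ω ∂μ = ∫ ω, Z ω ∂μ) (hXZ : ∀ᵐ ω ∂μ, X ω = a ∨ Z ω ≤ X ω ∧ X ω ≤ a)
    (hφX : Integrable (fun ω ↦ φ (X ω)) μ) (hφZ : Integrable (fun ω ↦ φ (Z ω)) μ) :
    ∫ ω, φ (X ω) ∂μ ≤ ∫ ω, φ (Z ω) ∂μ := by
  set m := derivWithin φ (Ioi a) a
  have hψ : ∫ ω, (φ (X ω) - m * X ω) ∂μ ≤ ∫ ω, (φ (Z ω) - m * Z ω) ∂μ := by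
    refine integral_mono_ae (hφX.sub (hX.const_mul m)) (hφZ.sub (hZ.const_mul m)) ?_
    filter_upwards [hXZ] with ω hω
    rcases hω with hXa | ⟨hZX, hXa⟩
    · rw [hXa]
      exact isMinOn_iff.1 (hφ.isMinOn_sub_rightDeriv_mul a) (Z ω) (mem_univ _)
    · exact hφ.antitoneOn_sub_rightDeriv_mul a (hZX.trans hXa) hXa hZX
  rw [integral_sub hφX (hX.const_mul m), integral_sub hφZ (hZ.const_mul m),
    integral_const_mul, integral_const_mul, hmean] at hψ
  linarith

end ConvexOn

theorem MonotoneOn.integrableOn_comp {μ : Measure ℝ} {s : Set ℝ} (hs : MeasurableSet s)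
    (hμs : μ s < ⊤) {f : ℝ → ℝ} (hf : MonotoneOn f s) {K : Set ℝ} (hK : IsCompact K)
    (hfK : MapsTo f s K) {φ : ℝ → ℝ} (hφ : Continuous φ) :
    IntegrableOn (fun y ↦ φ (f y)) s μ := by
  obtain ⟨C, hC⟩ := hK.exists_bound_of_continuousOn hφ.continuousOn
  have hφf : AEMeasurable (fun y ↦ φ (f y)) (μ.restrict s) :=
    hφ.measurable.comp_aemeasurable (aemeasurable_restrict_of_monotoneOn hs hf)
  exact .of_bound hμs hφf.aestronglyMeasurable C
    (ae_restrict_of_forall_mem hs fun y hy ↦ hC _ (hfK hy))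

lemma integral_Ioo_min {a : ℝ} (ha : a ∈ Icc (0 : ℝ) 1) :
    ∫ y in Ioo (0 : ℝ) 1, min y a = a - a ^ 2 / 2 := by
  have hmin : Continuous fun y : ℝ ↦ min y a := continuous_id.min continuous_const
  rw [← integral_Ioc_eq_integral_Ioo, ← intervalIntegral.integral_of_le zero_le_one,
    ← intervalIntegral.integral_add_adjacent_intervals (b := a)
      (hmin.intervalIntegrable _ _) (hmin.intervalIntegrable _ _),
    intervalIntegral.integral_congr (f := fun y ↦ min y a) (g := fun y ↦ y)
      fun y hy ↦ min_eq_left (uIcc_of_le ha.1 ▸ hy).2,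
    intervalIntegral.integral_congr (f := fun y ↦ min y a) (g := fun _ ↦ a)
      fun y hy ↦ min_eq_right (uIcc_of_le ha.2 ▸ hy).1,
    integral_id, intervalIntegral.integral_const, smul_eq_mul]
  ring

lemma exists_integral_Ioo_min_eq {f : ℝ → ℝ} (hf : IntegrableOn f (Ioo 0 1))
    (hf_nonneg : ∀ y ∈ Ioo (0 : ℝ) 1, 0 ≤ f y) (hf_le : ∀ y ∈ Ioo (0 : ℝ) 1, f y ≤ y) :
    ∃ a ∈ Icc (0 : ℝ) 1, ∫ y in Ioo (0 : ℝ) 1, min y a = ∫ y in Ioo (0 : ℝ) 1, f y := by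
  have hmean_le : ∫ y in Ioo (0 : ℝ) 1, f y ≤ 1 / 2 :=
    calc ∫ y in Ioo (0 : ℝ) 1, f y ≤ ∫ y in Ioo (0 : ℝ) 1, min y 1 :=
          setIntegral_mono_on hf
            ((continuous_id.min continuous_const).integrableOn_Icc.mono_set Ioo_subset_Icc_self)
            measurableSet_Ioo fun y hy ↦ le_min (hf_le y hy) ((hf_le y hy).trans hy.2.le)
      _ = 1 / 2 := by norm_num [integral_Ioo_min]
  have hmean_nonneg : 0 ≤ ∫ y in Ioo (0 : ℝ) 1, f y :=
    setIntegral_nonneg measurableSet_Ioo hf_nonneg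
  have hcont : ContinuousOn (fun a : ℝ ↦ a - a ^ 2 / 2) (Icc 0 1) := by fun_prop
  obtain ⟨a, ha, hmean⟩ := intermediate_value_Icc zero_le_one hcont
    (by norm_num [hmean_nonneg, hmean_le] : ∫ y in Ioo (0 : ℝ) 1, f y ∈ Icc _ _)
  exact ⟨a, ha, (integral_Ioo_min ha).trans hmean⟩

theorem stopLoss_convex_order_general (f : ℝ → ℝ)
    (hf1 : ∀ t ∈ Set.Icc (0 : ℝ) 1, 0 ≤ f t ∧ f t ≤ t)
    (hf2 : MonotoneOn f (Set.Icc (0 : ℝ) 1)) :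
    ∃ a ∈ Set.Icc (0 : ℝ) 1,
      (∫ y in Set.Ioo (0 : ℝ) 1, min y a) = (∫ y in Set.Ioo (0 : ℝ) 1, f y) ∧
      ∀ φ : ℝ → ℝ, ConvexOn ℝ Set.univ φ →
        (∫ y in Set.Ioo (0 : ℝ) 1, φ (min y a)) ≤ ∫ y in Set.Ioo (0 : ℝ) 1, φ (f y) := by
  have hf : ∀ y ∈ Ioo (0 : ℝ) 1, 0 ≤ f y ∧ f y ≤ y := fun y hy ↦ hf1 y (Ioo_subset_Icc_self hy)
  have hf_comp {φ : ℝ → ℝ} (hφ : Continuous φ) : IntegrableOn (fun y ↦ φ (f y)) (Ioo 0 1) :=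
    (hf2.mono Ioo_subset_Icc_self).integrableOn_comp measurableSet_Ioo measure_Ioo_lt_top
      isCompact_Icc (fun y hy ↦ ⟨(hf y hy).1, (hf y hy).2.trans hy.2.le⟩) hφ
  have hmin_comp (a : ℝ) {φ : ℝ → ℝ} (hφ : Continuous φ) :
      IntegrableOn (fun y ↦ φ (min y a)) (Ioo 0 1) :=
    (hφ.comp (continuous_id.min continuous_const)).integrableOn_Icc.mono_set Ioo_subset_Icc_self
  obtain ⟨a, ha, hmean⟩ :=
    exists_integral_Ioo_min_eq (hf_comp continuous_id) (fun y hy ↦ (hf y hy).1)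
      (fun y hy ↦ (hf y hy).2)
  refine ⟨a, ha, hmean, fun φ hφ ↦ ?_⟩
  have hφc : Continuous φ := continuousOn_univ.1 (hφ.continuousOn isOpen_univ)
  refine hφ.integral_comp_le_of_truncation (a := a) (hmin_comp a continuous_id)
    (hf_comp continuous_id) hmean (ae_restrict_of_forall_mem measurableSet_Ioo fun y hy ↦ ?_)
    (hmin_comp a hφc) (hf_comp hφc)
  rcases le_total a y with hay | hya
  · exact .inl (min_eq_right hay)
  · rw [min_eq_left hya]
    exact .inr ⟨(hf y hy).2, hya⟩

/-- For `Y ~ Uniform(0,1)` and `f ∈ 𝓕` there is `a ∈ [0,1]` with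
`E[min{Y,a}] = E[f(Y)]`, and `min{Y,a}` precedes `f(Y)` in the convex order. -/
theorem stopLoss_convex_order (f : ℝ → ℝ)
    (hf1 : ∀ t ∈ Set.Icc (0 : ℝ) 1, 0 ≤ f t ∧ f t ≤ t)
    (hf2 : MonotoneOn f (Set.Icc (0 : ℝ) 1))
    (hf3 : MonotoneOn (fun t => t - f t) (Set.Icc (0 : ℝ) 1)) :
    ∃ a ∈ Set.Icc (0 : ℝ) 1,
      (∫ y in Set.Ioo (0 : ℝ) 1, min y a) = (∫ y in Set.Ioo (0 : ℝ) 1, f y) ∧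
      ∀ φ : ℝ → ℝ, ConvexOn ℝ Set.univ φ →
        (∫ y in Set.Ioo (0 : ℝ) 1, φ (min y a)) ≤ ∫ y in Set.Ioo (0 : ℝ) 1, φ (f y) :=
  stopLoss_convex_order_general f hf1 hf2
end
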